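/- arXiv:2106.14872 — 4 statements merged into one kernel-verified Lean document; each statement's English description precedes it below -/
import Mathlib

section
/- Spectral properties, part 3: Let X be a complex infinite-dimensional separable Banach space and let A be a densely defined linear operator in X such that every power A^n (n ∈ ℕ) is a closed operator, and suppose there exist a set Y ⊆ C^∞(A) dense in X and a mapping B : Y → Y with ABf = f for every f ∈ Y, such that for every f ∈ Y and every α ∈ (0,1) there exists c = c(f,α) > 0 with max(‖A^n f‖, ‖B^n f‖) ≤ c·α^n for all n ∈ ℕ (equivalently, r(A,f) = r(B,f) = 0 for all f ∈ Y). Then for every γ ∈ (0,1) there exists M ∈ ℕ such that for all n ≥ M the annulus {λ ∈ ℂ : γ^n ≤ |λ| ≤ 1/γ^n} is contained in σ_p(A^n); in particular, for every λ ∈ ℂ \ {0} there exists M ∈ ℕ such that λ ∈ σ_p(A^n) for all n ≥ M. -/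
open Filter Topology TopologicalSpace

/-- The domain of the `n`-th power of the operator `A` with domain `D`:
`x ∈ D(Aⁿ)` iff `Aᵏx ∈ D(A)` for all `k < n`. -/
def opDom {X : Type*} (A : X → X) (D : Set X) (n : ℕ) : Set X :=
  {x | ∀ k < n, A^[k] x ∈ D}

/-- `C^∞(A) = ⋂ₙ D(Aⁿ)`. -/
def opCinf {X : Type*} (A : X → X) (D : Set X) : Set X :=
  {x | ∀ k : ℕ, A^[k] x ∈ D}

/-- `A` is linear on the subspace `D`. -/
def IsLinearOn (𝕜 : Type*) {X : Type*} [RCLike 𝕜] [NormedAddCommGroup X]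
    [NormedSpace 𝕜 X] (A : X → X) (D : Set X) : Prop :=
  (∀ x ∈ D, ∀ y ∈ D, A (x + y) = A x + A y) ∧
  (∀ (c : 𝕜), ∀ x ∈ D, A (c • x) = c • A x)

/-- The `n`-th power of `A` (with domain `D`) is a closed operator:
its graph is closed in `X × X`. -/
def ClosedPower {X : Type*} [NormedAddCommGroup X] (A : X → X) (D : Set X)
    (n : ℕ) : Prop :=
  IsClosed {p : X × X | p.1 ∈ opDom A D n ∧ p.2 = A^[n] p.1}

/-- A hypercyclic vector for `A`: a nonzero `f ∈ C^∞(A)` with dense orbit. -/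
def HypercyclicVec {X : Type*} [NormedAddCommGroup X] (A : X → X) (D : Set X)
    (f : X) : Prop :=
  f ∈ opCinf A D ∧ f ≠ 0 ∧ Dense (Set.range fun n : ℕ => A^[n] f)

/-- `A` (with domain `D`) is hypercyclic. -/
def HypercyclicOp {X : Type*} [NormedAddCommGroup X] (A : X → X) (D : Set X) :
    Prop :=
  ∃ f, HypercyclicVec A D f

/-- `f` is a periodic point of `A`: `f ∈ D(A^N)` and `A^N f = f` for some `N ≥ 1`. -/
def PeriodicPt {X : Type*} (A : X → X) (D : Set X) (f : X) : Prop :=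
  ∃ N : ℕ, 0 < N ∧ f ∈ opDom A D N ∧ A^[N] f = f

/-- `A` (with domain `D`) is chaotic: hypercyclic with a dense set of periodic
points. -/
def ChaoticOp {X : Type*} [NormedAddCommGroup X] (A : X → X) (D : Set X) : Prop :=
  HypercyclicOp A D ∧ Dense {f | PeriodicPt A D f}

/-- The local quantity `r(T,f) = limsup ‖Tⁿ f‖^{1/n}`, computed in `ℝ≥0∞`. -/
noncomputable def orbitRad {X : Type*} [NormedAddCommGroup X] (T : X → X)
    (f : X) : ENNReal :=
  Filter.limsup (fun n : ℕ => (‖T^[n] f‖₊ : ENNReal) ^ (1 / (n : ℝ))) Filter.atTop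

/-- The point spectrum of the `n`-th power of `A` (with domain `D`):
`λ ∈ σ_p(Aⁿ)` iff `Aⁿ g = λ g` for some nonzero `g ∈ D(Aⁿ)`. -/
def pointSpecPow {X : Type*} [NormedAddCommGroup X] [NormedSpace ℂ X]
    (A : X → X) (D : Set X) (n : ℕ) : Set ℂ :=
  {l | ∃ g, g ≠ 0 ∧ g ∈ opDom A D n ∧ A^[n] g = l • g}

/-!
Fix a nonzero `f ∈ Y` and let `w` be its two-sided orbit under `Aⁿ`: `w k = A^(n k) f` for `k ≥ 0`
and `w k = B^(-n k) f` for `k < 0`, so that `Aⁿ (w k) = w (k + 1)` for every `k ∈ ℤ`. For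
`γⁿ ≤ |λ| ≤ γ⁻ⁿ` the candidate eigenvector is `g = ∑_{k ∈ ℤ} λ⁻ᵏ w k`. Using the decay hypothesis
with `α = γ / 2`, the `k`-th term is at most `c r^|k|` with `r = 2⁻ⁿ`, so the series converges and
`‖g - f‖ ≤ 2 c r / (1 - r) < ‖f‖` for large `n`; in particular `g ≠ 0`. On the symmetric partial
sums `p_N`, `Aⁿ p_N - λ p_N` telescopes to two boundary terms of the series, which tend to `0`, so
the closedness of `Aⁿ` gives `Aⁿ g = λ g`.
-/

open Finset Set

theorem Set.LeftInvOn.iterate {α : Type*} {T S : α → α} {s : Set α} (h : LeftInvOn T S s)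
    (hS : MapsTo S s s) (n : ℕ) : LeftInvOn T^[n] S^[n] s := by
  induction n with
  | zero => exact fun _ _ => rfl
  | succ n ih =>
    intro y hy
    rw [Function.iterate_succ_apply' S, Function.iterate_succ_apply T, h (hS.iterate n hy), ih hy]

section TwoSidedOrbit

variable {α : Type*} {T S : α → α} {x : α}

def twoSidedOrbit (T S : α → α) (x : α) : ℤ → α
  | (m : ℕ) => T^[m] x
  | .negSucc m => S^[m + 1] x

theorem twoSidedOrbit_add_one {s : Set α} (hTS : LeftInvOn T S s) (hS : MapsTo S s s)
    (hx : x ∈ s) (k : ℤ) : twoSidedOrbit T S x (k + 1) = T (twoSidedOrbit T S x k) := by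
  match k with
  | (m : ℕ) => exact Function.iterate_succ_apply' T m x
  | .negSucc 0 => exact (hTS hx).symm
  | .negSucc (m + 1) =>
    rw [show Int.negSucc (m + 1) + 1 = Int.negSucc m by omega]
    show S^[m + 1] x = T (S^[m + 2] x)
    rw [Function.iterate_succ_apply' S (m + 1), hTS (hS.iterate (m + 1) hx)]

theorem twoSidedOrbit_mem {s t : Set α} (hT : MapsTo T t t) (hS : MapsTo S s s) (hst : s ⊆ t)
    (hx : x ∈ s) : ∀ k, twoSidedOrbit T S x k ∈ t
  | (m : ℕ) => hT.iterate m (hst hx)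
  | .negSucc m => hst (hS.iterate (m + 1) hx)

end TwoSidedOrbit

theorem norm_twoSidedOrbit_le {X : Type*} [Norm X] {T S : X → X} {x : X} {c β : ℝ}
    (h : ∀ j > 0, max ‖T^[j] x‖ ‖S^[j] x‖ ≤ c * β ^ j) {k : ℤ} (hk : k ≠ 0) :
    ‖twoSidedOrbit T S x k‖ ≤ c * β ^ k.natAbs :=
  match k with
  | (m : ℕ) => (le_max_left _ _).trans (h m (by omega))
  | .negSucc m => (le_max_right _ _).trans (h (m + 1) m.succ_pos)

theorem LinearMap.map_sum_Icc_zpow_smul {K M : Type*} [Field K] [AddCommGroup M] [Module K M]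
    (T : M →ₗ[K] M) {w : ℤ → M} (hw : ∀ k, T (w k) = w (k + 1)) {l : K} (hl : l ≠ 0) (N : ℕ) :
    T (∑ k ∈ Icc (-N : ℤ) N, l ^ (-k) • w k) =
      l • (∑ k ∈ Icc (-N : ℤ) N, l ^ (-k) • w k + l ^ (-(N + 1 : ℤ)) • w (N + 1)
        - l ^ (N : ℤ) • w (-N)) := by
  set F : ℤ → M := fun k => l ^ (1 - k) • w k
  have hscale : ∀ k, l • l ^ (-k) • w k = F k := fun k => by
    rw [smul_smul, ← zpow_one_add₀ hl, ← sub_eq_add_neg]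
  have hshift : ∀ k, T (l ^ (-k) • w k) = F (k + 1) := fun k => by simp [F, hw]
  have htel : ∑ k ∈ Icc (-N : ℤ) N, (F (k + 1) - F k) = F (N + 1) - F (-N) := by
    have hrev : ∑ k ∈ Ico (-N : ℤ) N, (F (k + 1) - F k) =
        -∑ k ∈ Ico (-N : ℤ) N, (F k - F (k + 1)) := by
      rw [← sum_neg_distrib]; simp only [neg_sub]
    rw [sum_Icc_eq_sum_Ico_add _ (by omega), hrev, sum_Ico_int_sub]
    abel
  have hlast : l • l ^ (N : ℤ) • w (-N) = F (-N) := by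
    rw [← hscale, neg_neg]
  rw [sum_sub_distrib] at htel
  rw [map_sum, smul_sub, smul_add, hscale, hlast, smul_sum]
  simp only [hshift, hscale]
  rw [add_sub_assoc, ← htel]
  abel

theorem IsClosed.mem_of_hasSum_zpow_smul {𝕜 X : Type*} [NormedField 𝕜] [NormedAddCommGroup X]
    [NormedSpace 𝕜 X] {E : Submodule 𝕜 X} {G : Set (X × X)} (hG : IsClosed G) (T : E →ₗ[𝕜] E)
    (hTG : ∀ x : E, ((x : X), (T x : X)) ∈ G) {w : ℤ → E} (hw : ∀ k, T (w k) = w (k + 1))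
    {l : 𝕜} (hl : l ≠ 0) {g : X} (hg : HasSum (fun k => l ^ (-k) • (w k : X)) g) :
    (g, l • g) ∈ G := by
  set u : ℤ → X := fun k => l ^ (-k) • (w k : X)
  have hpartial : Tendsto (fun N : ℕ => ∑ k ∈ Icc (-N : ℤ) N, u k) atTop (𝓝 g) :=
    SummationFilter.hasSum_symmetricIcc_iff.mp
      (hg.mono_left (SummationFilter.symmetricIcc ℤ).le_atTop)
  have hu : Tendsto u cofinite (𝓝 0) := hg.summable.tendsto_cofinite_zero
  have hfwd : Tendsto (fun N : ℕ => u (N + 1)) atTop (𝓝 0) := by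
    rw [← Nat.cofinite_eq_atTop]
    exact hu.comp (Function.Injective.tendsto_cofinite fun m n h => by simpa using h)
  have hbwd : Tendsto (fun N : ℕ => u (-N)) atTop (𝓝 0) := by
    rw [← Nat.cofinite_eq_atTop]
    exact hu.comp (Function.Injective.tendsto_cofinite fun m n h => by simpa using h)
  have himage : Tendsto (fun N : ℕ => l • (∑ k ∈ Icc (-N : ℤ) N, u k + u (N + 1) - u (-N)))
      atTop (𝓝 (l • g)) := by
    simpa using ((hpartial.add hfwd).sub hbwd).const_smul l
  refine hG.mem_of_tendsto (hpartial.prodMk_nhds himage) (Eventually.of_forall fun N => ?_)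
  have hN := hTG (∑ k ∈ Icc (-N : ℤ) N, l ^ (-k) • w k)
  rw [T.map_sum_Icc_zpow_smul hw hl N] at hN
  push_cast at hN
  simpa only [u, neg_neg] using hN

theorem exists_hasSum_norm_sub_le_of_norm_le_geometric {X : Type*} [NormedAddCommGroup X]
    [CompleteSpace X] {u : ℤ → X} {c r : ℝ} (hr0 : 0 ≤ r) (hr1 : r < 1)
    (hu : ∀ k ≠ 0, ‖u k‖ ≤ c * r ^ k.natAbs) :
    ∃ g, HasSum u g ∧ ‖g - u 0‖ ≤ 2 * c * r / (1 - r) := by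
  have hgeom : HasSum (fun n : ℕ => c * r ^ (n + 1)) (c * r / (1 - r)) := by
    simpa [pow_succ, mul_assoc, mul_comm r, div_eq_mul_inv] using
      (hasSum_geometric_of_lt_one hr0 hr1).mul_left (c * r)
  have hfwd : ∀ n : ℕ, ‖u (n + 1)‖ ≤ c * r ^ (n + 1) := fun n => by
    have h := hu ((n + 1 : ℕ) : ℤ) (by omega)
    rwa [Int.natAbs_natCast, Nat.cast_succ] at h
  have hbwd : ∀ n : ℕ, ‖u (-(n + 1))‖ ≤ c * r ^ (n + 1) := fun n => by
    have h := hu (-((n + 1 : ℕ) : ℤ)) (by omega)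
    rwa [Int.natAbs_neg, Int.natAbs_natCast, Nat.cast_succ] at h
  refine ⟨_, ((Summable.of_norm_bounded hgeom.summable hfwd).hasSum).of_add_one_of_neg_add_one
    (Summable.of_norm_bounded hgeom.summable hbwd).hasSum, ?_⟩
  calc ‖(∑' n : ℕ, u (n + 1)) + u 0 + ∑' n : ℕ, u (-(n + 1)) - u 0‖
      = ‖(∑' n : ℕ, u (n + 1)) + ∑' n : ℕ, u (-(n + 1))‖ := by congr 1; abel
    _ ≤ c * r / (1 - r) + c * r / (1 - r) :=
        norm_add_le_of_le (tsum_of_norm_bounded hgeom hfwd) (tsum_of_norm_bounded hgeom hbwd)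
    _ = 2 * c * r / (1 - r) := by ring

theorem norm_zpow_le_of_mem_annulus {𝕜 : Type*} [NormedDivisionRing 𝕜] {l : 𝕜} {a : ℝ}
    (ha : 0 < a) (hla : a ≤ ‖l‖) (hlb : ‖l‖ ≤ 1 / a) (k : ℤ) :
    ‖l ^ k‖ ≤ (1 / a) ^ k.natAbs := by
  obtain ⟨n, rfl | rfl⟩ := Int.eq_nat_or_neg k
  · rw [zpow_natCast, norm_pow, Int.natAbs_natCast]
    exact pow_le_pow_left₀ (norm_nonneg l) hlb n
  · rw [zpow_neg, zpow_natCast, norm_inv, norm_pow, Int.natAbs_neg, Int.natAbs_natCast, ← inv_pow,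
      one_div]
    exact pow_le_pow_left₀ (by positivity) (inv_anti₀ ha hla) n

theorem iterate_mem_opCinf {X : Type*} {A : X → X} {D : Set X} {x : X} (hx : x ∈ opCinf A D)
    (k : ℕ) : A^[k] x ∈ opCinf A D := fun j => by
  rw [← Function.iterate_add_apply]
  exact hx (j + k)

section SmoothVectors

variable {𝕜 X : Type*} [RCLike 𝕜] [NormedAddCommGroup X] [NormedSpace 𝕜 X] {D : Submodule 𝕜 X}
  {A : X → X}

theorem iterate_add_of_mem_opCinf (hlin : IsLinearOn 𝕜 A D) {x y : X} (hx : x ∈ opCinf A D)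
    (hy : y ∈ opCinf A D) (k : ℕ) : A^[k] (x + y) = A^[k] x + A^[k] y := by
  induction k with
  | zero => rfl
  | succ k ih =>
    simp only [Function.iterate_succ_apply', ih]
    exact hlin.1 _ (hx k) _ (hy k)

theorem iterate_smul_of_mem_opCinf (hlin : IsLinearOn 𝕜 A D) {x : X} (hx : x ∈ opCinf A D)
    (a : 𝕜) (k : ℕ) : A^[k] (a • x) = a • A^[k] x := by
  induction k with
  | zero => rfl
  | succ k ih =>
    simp only [Function.iterate_succ_apply', ih]
    exact hlin.2 a _ (hx k)

def smoothSubmodule (hlin : IsLinearOn 𝕜 A D) : Submodule 𝕜 X where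
  carrier := opCinf A D
  add_mem' {x y} hx hy k := by
    rw [iterate_add_of_mem_opCinf hlin hx hy]
    exact D.add_mem (hx k) (hy k)
  zero_mem' k := by
    have hA0 : A 0 = 0 := by simpa using hlin.2 0 0 D.zero_mem
    rw [Function.iterate_fixed hA0]
    exact D.zero_mem
  smul_mem' a x hx k := by
    rw [iterate_smul_of_mem_opCinf hlin hx]
    exact D.smul_mem a (hx k)

def smoothOp (hlin : IsLinearOn 𝕜 A D) : smoothSubmodule hlin →ₗ[𝕜] smoothSubmodule hlin where
  toFun x := ⟨A x, iterate_mem_opCinf x.2 1⟩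
  map_add' x y := Subtype.ext (hlin.1 _ (x.2 0) _ (y.2 0))
  map_smul' a x := Subtype.ext (hlin.2 a _ (x.2 0))

theorem coe_smoothOp_pow_apply (hlin : IsLinearOn 𝕜 A D) (n : ℕ) (x : smoothSubmodule hlin) :
    ((smoothOp hlin ^ n) x : X) = A^[n] x := by
  induction n with
  | zero => rfl
  | succ n ih => rw [pow_succ', Module.End.mul_apply, Function.iterate_succ_apply', ← ih]; rfl

end SmoothVectors

section PointSpectrum

variable {X : Type*} [NormedAddCommGroup X] [NormedSpace ℂ X] [CompleteSpace X]
  {D : Submodule ℂ X} {A : X → X}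

theorem mem_pointSpecPow_of_norm_iterate_le (hlin : IsLinearOn ℂ A D)
    {Y : Set X} (hYsub : Y ⊆ opCinf A D) {B : X → X} (hBmaps : MapsTo B Y Y)
    (hAB : LeftInvOn A B Y) {n : ℕ} (hn : 0 < n) (hcl : ClosedPower A D n)
    {f : X} (hf : f ∈ Y) {c α γ : ℝ} (hα : 0 < α) (hαγ : α < γ)
    (hbound : ∀ j > 0, max ‖A^[j] f‖ ‖B^[j] f‖ ≤ c * α ^ j)
    (hsmall : 2 * c * (α / γ) ^ n / (1 - (α / γ) ^ n) < ‖f‖)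
    {l : ℂ} (hl₁ : γ ^ n ≤ ‖l‖) (hl₂ : ‖l‖ ≤ 1 / γ ^ n) :
    l ∈ pointSpecPow A D n := by
  have hγ : 0 < γ := hα.trans hαγ
  have hr1 : (α / γ) ^ n < 1 := pow_lt_one₀ (by positivity) ((div_lt_one hγ).2 hαγ) hn.ne'
  have hl : l ≠ 0 := norm_pos_iff.mp ((pow_pos hγ n).trans_le hl₁)
  set orbit := twoSidedOrbit A^[n] B^[n] f
  have horbit_mem : ∀ k, orbit k ∈ smoothSubmodule hlin :=
    twoSidedOrbit_mem (fun _ hx => iterate_mem_opCinf hx n) (hBmaps.iterate n) hYsub hf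
  set w : ℤ → smoothSubmodule hlin := fun k => ⟨orbit k, horbit_mem k⟩
  have hw : ∀ k, (smoothOp hlin ^ n) (w k) = w (k + 1) := fun k => Subtype.ext <|
    (coe_smoothOp_pow_apply hlin n (w k)).trans
      (twoSidedOrbit_add_one (hAB.iterate hBmaps n) (hBmaps.iterate n) hf k).symm
  have hdecay : ∀ k ≠ 0, ‖l ^ (-k) • orbit k‖ ≤ c * ((α / γ) ^ n) ^ k.natAbs := fun k hk => by
    have horbit : ‖orbit k‖ ≤ c * (α ^ n) ^ k.natAbs := norm_twoSidedOrbit_le (fun j hj => by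
      simpa only [← Function.iterate_mul, ← pow_mul] using hbound (n * j) (by positivity)) hk
    have hpow := norm_zpow_le_of_mem_annulus (by positivity) hl₁ hl₂ (-k)
    rw [Int.natAbs_neg] at hpow
    calc ‖l ^ (-k) • orbit k‖ ≤ (1 / γ ^ n) ^ k.natAbs * (c * (α ^ n) ^ k.natAbs) := by
          rw [norm_smul]
          exact mul_le_mul hpow horbit (norm_nonneg _) (by positivity)
      _ = c * ((α / γ) ^ n) ^ k.natAbs := by ring
  obtain ⟨g, hg, hgf⟩ := exists_hasSum_norm_sub_le_of_norm_le_geometric (by positivity) hr1 hdecay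
  have hg0 : g ≠ 0 := by
    rintro rfl
    simp only [neg_zero, zpow_zero, one_smul, zero_sub, norm_neg] at hgf
    exact (hgf.trans_lt hsmall).false
  have hgraph := hcl.mem_of_hasSum_zpow_smul (smoothOp hlin ^ n)
    (fun x => ⟨fun k _ => x.2 k, coe_smoothOp_pow_apply hlin n x⟩) hw hl hg
  exact ⟨g, hg0, hgraph.1, hgraph.2.symm⟩

theorem eventually_mem_pointSpecPow_of_norm_iterate_le
    (hlin : IsLinearOn ℂ A D) (hcl : ∀ n, 0 < n → ClosedPower A D n) {Y : Set X}
    (hYsub : Y ⊆ opCinf A D) {B : X → X} (hBmaps : MapsTo B Y Y) (hAB : LeftInvOn A B Y)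
    {f : X} (hf : f ∈ Y) (hf0 : f ≠ 0) {c α γ : ℝ} (hα : 0 < α) (hαγ : α < γ)
    (hbound : ∀ j > 0, max ‖A^[j] f‖ ‖B^[j] f‖ ≤ c * α ^ j) :
    ∀ᶠ n in atTop, ∀ l : ℂ, γ ^ n ≤ ‖l‖ → ‖l‖ ≤ 1 / γ ^ n → l ∈ pointSpecPow A D n := by
  have hγ : 0 < γ := hα.trans hαγ
  have hr : Tendsto (fun n : ℕ => (α / γ) ^ n) atTop (𝓝 0) :=
    tendsto_pow_atTop_nhds_zero_of_lt_one (div_pos hα hγ).le ((div_lt_one hγ).2 hαγ)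
  have hsmall : Tendsto (fun n : ℕ => 2 * c * (α / γ) ^ n / (1 - (α / γ) ^ n)) atTop (𝓝 0) := by
    simpa [Pi.div_def] using (hr.const_mul (2 * c)).div (tendsto_const_nhds.sub hr) (by norm_num)
  filter_upwards [eventually_gt_atTop 0, hsmall.eventually (gt_mem_nhds (norm_pos_iff.2 hf0))]
    with n hn hn_small l hl₁ hl₂
  exact mem_pointSpecPow_of_norm_iterate_le hlin hYsub hBmaps hAB hn (hcl n hn) hf hα hαγ hbound
    hn_small hl₁ hl₂

end PointSpectrum

theorem eventually_mem_annulus {𝕜 : Type*} [NormedField 𝕜] {l : 𝕜} (hl : l ≠ 0) {γ : ℝ}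
    (hγ₀ : 0 < γ) (hγ₁ : γ < 1) : ∀ᶠ n : ℕ in atTop, γ ^ n ≤ ‖l‖ ∧ ‖l‖ ≤ 1 / γ ^ n := by
  have hlow := (tendsto_pow_atTop_nhds_zero_of_lt_one hγ₀.le hγ₁).eventually
    (gt_mem_nhds (norm_pos_iff.2 hl))
  have hhigh := (tendsto_pow_atTop_atTop_of_one_lt ((one_lt_div hγ₀).2 hγ₁)).eventually_ge_atTop ‖l‖
  filter_upwards [hlow, hhigh] with n h₁ h₂
  exact ⟨h₁.le, by rwa [one_div_pow] at h₂⟩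

theorem exists_pos_forall_ge_of_eventually_atTop {p : ℕ → Prop} (h : ∀ᶠ n in atTop, p n) :
    ∃ M, 0 < M ∧ ∀ n ≥ M, p n := by
  obtain ⟨M, hM⟩ := eventually_atTop.mp h
  exact ⟨M + 1, M.succ_pos, fun n hn => hM n (by omega)⟩

theorem spectral_properties_part3_general
    {X : Type*} [NormedAddCommGroup X] [NormedSpace ℂ X]
    [CompleteSpace X]
    (hinfdim : ¬ FiniteDimensional ℂ X)
    (D : Submodule ℂ X) (A : X → X)
    (hlin : IsLinearOn ℂ A (D : Set X))
    (hcl : ∀ n : ℕ, 0 < n → ClosedPower A (D : Set X) n)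
    (Y : Set X) (hYsub : Y ⊆ opCinf A (D : Set X)) (hYdense : Dense Y)
    (B : X → X) (hBmaps : Set.MapsTo B Y Y)
    (h1 : ∀ f ∈ Y, A (B f) = f)
    (h2 : ∀ f ∈ Y, ∀ α ∈ Set.Ioo (0 : ℝ) 1, ∃ c > 0, ∀ n : ℕ, 0 < n →
      max ‖A^[n] f‖ ‖B^[n] f‖ ≤ c * α ^ n) :
    (∀ γ : ℝ, 0 < γ → γ < 1 →
      ∃ M : ℕ, 0 < M ∧ ∀ n ≥ M, ∀ l : ℂ, γ ^ n ≤ ‖l‖ → ‖l‖ ≤ 1 / γ ^ n →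
        l ∈ pointSpecPow A (D : Set X) n) ∧
    (∀ l : ℂ, l ≠ 0 →
      ∃ M : ℕ, 0 < M ∧ ∀ n ≥ M, l ∈ pointSpecPow A (D : Set X) n) := by
  have : Nontrivial X := not_subsingleton_iff_nontrivial.mp fun _ => hinfdim inferInstance
  obtain ⟨f, hfY, hf0⟩ : ∃ f ∈ Y, f ≠ 0 :=
    hYdense.exists_mem_open isOpen_compl_singleton (exists_ne 0)
  have hannulus : ∀ γ : ℝ, 0 < γ → γ < 1 → ∀ᶠ n in atTop, ∀ l : ℂ, γ ^ n ≤ ‖l‖ →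
      ‖l‖ ≤ 1 / γ ^ n → l ∈ pointSpecPow A (D : Set X) n := fun γ hγ₀ hγ₁ => by
    obtain ⟨c, -, hc⟩ := h2 f hfY (γ / 2) ⟨by positivity, by linarith⟩
    exact eventually_mem_pointSpecPow_of_norm_iterate_le hlin hcl hYsub hBmaps h1 hfY hf0
      (by positivity) (by linarith) hc
  refine ⟨fun γ hγ₀ hγ₁ => exists_pos_forall_ge_of_eventually_atTop (hannulus γ hγ₀ hγ₁),
    fun l hl => exists_pos_forall_ge_of_eventually_atTop ?_⟩
  filter_upwards [hannulus (1 / 2) (by norm_num) (by norm_num),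
    eventually_mem_annulus hl (by norm_num : (0 : ℝ) < 1 / 2) (by norm_num)] with n hn hl_mem
  exact hn l hl_mem.1 hl_mem.2

/-- **Spectral properties, part 3.** -/
theorem spectral_properties_part3
    {X : Type*} [NormedAddCommGroup X] [NormedSpace ℂ X]
    [CompleteSpace X] [SeparableSpace X]
    (hinfdim : ¬ FiniteDimensional ℂ X)
    (D : Submodule ℂ X) (A : X → X)
    (hlin : IsLinearOn ℂ A (D : Set X))
    (hdd : Dense (D : Set X))
    (hcl : ∀ n : ℕ, 0 < n → ClosedPower A (D : Set X) n)
    (Y : Set X) (hYsub : Y ⊆ opCinf A (D : Set X)) (hYdense : Dense Y)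
    (B : X → X) (hBmaps : Set.MapsTo B Y Y)
    (h1 : ∀ f ∈ Y, A (B f) = f)
    (h2 : ∀ f ∈ Y, ∀ α ∈ Set.Ioo (0 : ℝ) 1, ∃ c > 0, ∀ n : ℕ, 0 < n →
      max ‖A^[n] f‖ ‖B^[n] f‖ ≤ c * α ^ n) :
    (∀ γ : ℝ, 0 < γ → γ < 1 →
      ∃ M : ℕ, 0 < M ∧ ∀ n ≥ M, ∀ l : ℂ, γ ^ n ≤ ‖l‖ → ‖l‖ ≤ 1 / γ ^ n →
        l ∈ pointSpecPow A (D : Set X) n) ∧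
    (∀ l : ℂ, l ≠ 0 →
      ∃ M : ℕ, 0 < M ∧ ∀ n ≥ M, l ∈ pointSpecPow A (D : Set X) n) :=
  spectral_properties_part3_general hinfdim D A hlin hcl Y hYsub hYdense B hBmaps h1 h2
end

section
/- Spectral properties, part 5: Let X be a complex infinite-dimensional separable Banach space and let A be a densely defined linear operator in X such that every power A^n (n ∈ ℕ) is a closed operator, and suppose there exist a set Y ⊆ C^∞(A) dense in X and a mapping B : Y → Y with ABf = f for every f ∈ Y, such that (a) Y ⊆ ⋃_{n≥1} ker A^n, and (b) there is a single α ∈ (0,1) such that for every f ∈ Y there exists c = c(f,α) > 0 with ‖B^n f‖ ≤ c·α^n for all n ∈ ℕ. Then for every γ ∈ (α, 1) there exists M ∈ ℕ such that for all n ≥ M the closed disk {λ ∈ ℂ : |λ| ≤ 1/γ^n} is contained in σ_p(A^n); in particular, every λ ∈ ℂ with |λ| < 1/α is an eigenvalue of A^n for all sufficiently large n. -/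
open Filter Topology TopologicalSpace

/-!
Fix a nonzero `f ∈ Y` and `N` with `Aⁿ f = 0` for `n ≥ N`. For such `n` the series
`g = ∑ₖ λᵏ Bⁿᵏ f` converges as soon as `r = |λ| αⁿ < 1`, and its partial sums satisfy
`Aⁿ sₘ₊₁ = λ sₘ`, so closedness of `Aⁿ` gives `Aⁿ g = λ g`. The tail estimate
`‖g - f‖ ≤ c r / (1 - r)` keeps `g` away from `0` once `r` is small, and on the disc
`|λ| ≤ γ⁻ⁿ` we have `r ≤ (α / γ)ⁿ → 0`.
-/

theorem opCinf_subset_opDom {X : Type*} (A : X → X) (D : Set X) (n : ℕ) :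
    opCinf A D ⊆ opDom A D n :=
  fun _ hx k _ => hx k

namespace IsLinearOn

variable {𝕜 X : Type*} [RCLike 𝕜] [NormedAddCommGroup X] [NormedSpace 𝕜 X]
  {A : X → X} {D : Submodule 𝕜 X}

theorem iterate_map_zero (hA : IsLinearOn 𝕜 A D) (k : ℕ) : A^[k] 0 = 0 := by
  have hA0 : A 0 = 0 := by simpa using hA.2 0 0 D.zero_mem
  exact Function.iterate_fixed hA0 k

theorem iterate_map_add (hA : IsLinearOn 𝕜 A D) {x y : X} (hx : x ∈ opCinf A D)
    (hy : y ∈ opCinf A D) (k : ℕ) : A^[k] (x + y) = A^[k] x + A^[k] y := by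
  induction k with
  | zero => rfl
  | succ k ih => simp only [Function.iterate_succ_apply', ih, hA.1 _ (hx k) _ (hy k)]

theorem iterate_map_smul (hA : IsLinearOn 𝕜 A D) (c : 𝕜) {x : X} (hx : x ∈ opCinf A D)
    (k : ℕ) : A^[k] (c • x) = c • A^[k] x := by
  induction k with
  | zero => rfl
  | succ k ih => simp only [Function.iterate_succ_apply', ih, hA.2 c _ (hx k)]

def cinf (hA : IsLinearOn 𝕜 A D) : Submodule 𝕜 X where
  carrier := opCinf A D
  zero_mem' k := by rw [hA.iterate_map_zero]; exact D.zero_mem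
  add_mem' hx hy k := by rw [hA.iterate_map_add hx hy]; exact D.add_mem (hx k) (hy k)
  smul_mem' c _ hx k := by rw [hA.iterate_map_smul c hx]; exact D.smul_mem c (hx k)

theorem iterate_map_sum (hA : IsLinearOn 𝕜 A D) {ι : Type*} (s : Finset ι) {u : ι → X}
    (hu : ∀ i, u i ∈ opCinf A D) (k : ℕ) :
    A^[k] (∑ i ∈ s, u i) = ∑ i ∈ s, A^[k] (u i) := by
  classical
  induction s using Finset.induction_on with
  | empty => simp [hA.iterate_map_zero]
  | insert i s hi ih =>
    have hs : ∑ j ∈ s, u j ∈ hA.cinf := hA.cinf.sum_mem fun j _ => hu j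
    rw [Finset.sum_insert hi, hA.iterate_map_add (hu i) hs, ih, Finset.sum_insert hi]

end IsLinearOn

theorem Set.LeftInvOn.iterate_apply_iterate {X : Type*} {A B : X → X} {Y : Set X}
    (h : LeftInvOn A B Y) (hB : MapsTo B Y Y) (j : ℕ) {x : X} (hx : x ∈ Y) :
    A^[j] (B^[j] x) = x := by
  induction j with
  | zero => rfl
  | succ j ih =>
    rw [Function.iterate_succ_apply, Function.iterate_succ_apply' B, h (hB.iterate j hx), ih]

theorem summable_and_norm_tsum_sub_le_of_geometric {E : Type*} [NormedAddCommGroup E]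
    [CompleteSpace E] {u : ℕ → E} {c r : ℝ} (hr0 : 0 ≤ r) (hr1 : r < 1)
    (hu : ∀ k, ‖u (k + 1)‖ ≤ c * r ^ (k + 1)) :
    Summable u ∧ ‖∑' k, u k - u 0‖ ≤ c * r / (1 - r) := by
  have hgeom : HasSum (fun k : ℕ => c * r ^ (k + 1)) (c * r / (1 - r)) := by
    simpa [pow_succ, mul_assoc, mul_comm r, div_eq_mul_inv] using
      (hasSum_geometric_of_lt_one hr0 hr1).mul_left (c * r)
  have htail : Summable fun k => u (k + 1) := .of_norm_bounded hgeom.summable hu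
  have hsum : Summable u := (summable_nat_add_iff 1).mp htail
  refine ⟨hsum, ?_⟩
  rw [hsum.tsum_eq_zero_add, add_sub_cancel_left]
  exact tsum_of_norm_bounded hgeom hu

theorem ClosedPower.tsum_pow_smul_mem_eigen {X : Type*} [NormedAddCommGroup X]
    [NormedSpace ℂ X] {A : X → X} {D : Submodule ℂ X} (hA : IsLinearOn ℂ A D) {n : ℕ}
    (hcl : ClosedPower A D n) {v : ℕ → X} (hv : ∀ k, v k ∈ opCinf A D)
    (hv0 : A^[n] (v 0) = 0) (hvs : ∀ k, A^[n] (v (k + 1)) = v k) {l : ℂ}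
    (hsum : Summable fun k => l ^ k • v k) :
    (∑' k, l ^ k • v k) ∈ opDom A D n ∧
      A^[n] (∑' k, l ^ k • v k) = l • ∑' k, l ^ k • v k := by
  set s : ℕ → X := fun m => ∑ k ∈ Finset.range m, l ^ k • v k
  have hterm : ∀ k, l ^ k • v k ∈ opCinf A D := fun k => hA.cinf.smul_mem _ (hv k)
  have hs_mem : ∀ m, s m ∈ opCinf A D := fun m => hA.cinf.sum_mem fun k _ => hterm k
  have hshift : ∀ m, A^[n] (s (m + 1)) = l • s m := by
    intro m
    rw [hA.iterate_map_sum _ hterm, Finset.sum_range_succ', Finset.smul_sum]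
    simp only [hA.iterate_map_smul _ (hv _), hvs, hv0, smul_zero, add_zero, smul_smul, pow_succ']
  have hs : Tendsto s atTop (𝓝 (∑' k, l ^ k • v k)) := hsum.hasSum.tendsto_sum_nat
  have hgraph := hcl.isSeqClosed
    (x := fun m => (s (m + 1), l • s m))
    (fun m => ⟨opCinf_subset_opDom A D n (hs_mem _), (hshift m).symm⟩)
    ((hs.comp (tendsto_add_atTop_nat 1)).prodMk_nhds (hs.const_smul l))
  exact ⟨hgraph.1, hgraph.2.symm⟩

/-- The bound `‖λ‖ αⁿ < ‖f‖ / (‖f‖ + c)` is exactly `c r / (1 - r) < ‖f‖` for `r = ‖λ‖ αⁿ`,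
which rules out `∑ₖ λᵏ Bⁿᵏ f = 0`. -/
theorem mem_pointSpecPow_of_norm_mul_pow_lt {X : Type*} [NormedAddCommGroup X]
    [NormedSpace ℂ X] [CompleteSpace X] {A : X → X} {D : Submodule ℂ X}
    (hA : IsLinearOn ℂ A D) {n : ℕ} (hn : 0 < n) (hcl : ClosedPower A D n) {Y : Set X}
    (hYsub : Y ⊆ opCinf A D) {B : X → X} (hB : Set.MapsTo B Y Y) (hAB : Set.LeftInvOn A B Y)
    {f : X} (hf : f ∈ Y) (hfn : A^[n] f = 0) {α c : ℝ} (hα : 0 ≤ α) (hc : 0 ≤ c)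
    (hbound : ∀ j, 0 < j → ‖B^[j] f‖ ≤ c * α ^ j) {l : ℂ}
    (hl : ‖l‖ * α ^ n < ‖f‖ / (‖f‖ + c)) :
    l ∈ pointSpecPow A D n := by
  set r := ‖l‖ * α ^ n
  have hr0 : 0 ≤ r := by positivity
  have hfc : 0 < ‖f‖ + c := by
    rcases (add_nonneg (norm_nonneg f) hc).lt_or_eq with h | h
    · exact h
    · rw [← h, div_zero] at hl
      linarith
  have hrf : r * (‖f‖ + c) < ‖f‖ := (lt_div_iff₀ hfc).mp hl
  have hr1 : r < 1 := by nlinarith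
  set v : ℕ → X := fun k => B^[n * k] f
  have hvY : ∀ k, v k ∈ Y := fun k => hB.iterate _ hf
  have hvs : ∀ k, A^[n] (v (k + 1)) = v k := fun k => by
    simp only [v, Nat.mul_succ, add_comm (n * k), Function.iterate_add_apply]
    exact hAB.iterate_apply_iterate hB n (hvY k)
  have hterm : ∀ k, ‖l ^ (k + 1) • v (k + 1)‖ ≤ c * r ^ (k + 1) := fun k =>
    calc ‖l ^ (k + 1) • v (k + 1)‖ ≤ ‖l‖ ^ (k + 1) * (c * α ^ (n * (k + 1))) := by
          rw [norm_smul, norm_pow]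
          gcongr
          exact hbound _ (by positivity)
      _ = c * r ^ (k + 1) := by rw [mul_pow, ← pow_mul]; ring
  obtain ⟨hsum, hdist⟩ :=
    summable_and_norm_tsum_sub_le_of_geometric (u := fun k => l ^ k • v k) hr0 hr1 hterm
  obtain ⟨hmem, heig⟩ :=
    hcl.tsum_pow_smul_mem_eigen hA (fun k => hYsub (hvY k)) (by simpa [v] using hfn) hvs hsum
  refine ⟨_, fun h0 => ?_, hmem, heig⟩
  have hclose : c * r / (1 - r) < ‖f‖ := by
    rw [div_lt_iff₀ (by linarith)]
    linarith
  simp only [h0, v, pow_zero, mul_zero, Function.iterate_zero, id, one_smul, zero_sub,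
    norm_neg] at hdist
  linarith

theorem spectral_properties_part5_general
    {X : Type*} [NormedAddCommGroup X] [NormedSpace ℂ X]
    [CompleteSpace X]
    (hinfdim : ¬ FiniteDimensional ℂ X)
    (D : Submodule ℂ X) (A : X → X)
    (hlin : IsLinearOn ℂ A (D : Set X))
    (hcl : ∀ n : ℕ, 0 < n → ClosedPower A (D : Set X) n)
    (Y : Set X) (hYsub : Y ⊆ opCinf A (D : Set X)) (hYdense : Dense Y)
    (B : X → X) (hBmaps : Set.MapsTo B Y Y)
    (h1 : ∀ f ∈ Y, A (B f) = f)
    (h2a : ∀ f ∈ Y, ∃ N : ℕ, ∀ n ≥ N, A^[n] f = 0)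
    (α : ℝ) (hα : α ∈ Set.Ioo (0 : ℝ) 1)
    (h2b : ∀ f ∈ Y, ∃ c > 0, ∀ n : ℕ, 0 < n → ‖B^[n] f‖ ≤ c * α ^ n) :
    (∀ γ : ℝ, α < γ → γ < 1 →
      ∃ M : ℕ, 0 < M ∧ ∀ n ≥ M, ∀ l : ℂ, ‖l‖ ≤ 1 / γ ^ n →
        l ∈ pointSpecPow A (D : Set X) n) ∧
    (∀ l : ℂ, ‖l‖ < 1 / α →
      ∃ M : ℕ, 0 < M ∧ ∀ n ≥ M, l ∈ pointSpecPow A (D : Set X) n) := by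
  obtain ⟨hα0, hα1⟩ := hα
  have : Nontrivial X := by
    contrapose! hinfdim
    infer_instance
  obtain ⟨f, hfY, hf0⟩ : (Y \ {0}).Nonempty := (hYdense.sdiff_singleton 0).nonempty
  obtain ⟨N, hN⟩ := h2a f hfY
  obtain ⟨c, hc, hcb⟩ := h2b f hfY
  have hδ : 0 < ‖f‖ / (‖f‖ + c) := by
    have := norm_pos_iff.mpr hf0
    positivity
  have hspec : ∀ᶠ n in atTop, ∀ l : ℂ, ‖l‖ * α ^ n < ‖f‖ / (‖f‖ + c) →
      l ∈ pointSpecPow A D n := by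
    filter_upwards [eventually_ge_atTop N, eventually_gt_atTop 0] with n hnN hn l hl
    exact mem_pointSpecPow_of_norm_mul_pow_lt hlin hn (hcl n hn) hYsub hBmaps h1 hfY
      (hN n hnN) hα0.le hc.le hcb hl
  refine ⟨fun γ hαγ hγ1 => ?_, fun l _ => ?_⟩
  · have hγ : 0 < γ := hα0.trans hαγ
    have hρ : Tendsto (fun n => (α / γ) ^ n) atTop (𝓝 0) :=
      tendsto_pow_atTop_nhds_zero_of_lt_one (by positivity) ((div_lt_one hγ).2 hαγ)
    obtain ⟨M, hM⟩ := eventually_atTop.1 (hspec.and (hρ.eventually (gt_mem_nhds hδ)))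
    refine ⟨M + 1, M.succ_pos, fun n hn l hl => (hM n (by omega)).1 l ?_⟩
    calc ‖l‖ * α ^ n ≤ 1 / γ ^ n * α ^ n := by gcongr
      _ = (α / γ) ^ n := by rw [div_pow]; ring
      _ < _ := (hM n (by omega)).2
  · have hl : Tendsto (fun n => ‖l‖ * α ^ n) atTop (𝓝 0) := by
      simpa using (tendsto_pow_atTop_nhds_zero_of_lt_one hα0.le hα1).const_mul ‖l‖
    obtain ⟨M, hM⟩ := eventually_atTop.1 (hspec.and (hl.eventually (gt_mem_nhds hδ)))
    exact ⟨M + 1, M.succ_pos, fun n hn => (hM n (by omega)).1 l (hM n (by omega)).2⟩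

/-- **Spectral properties, part 5.** -/
theorem spectral_properties_part5
    {X : Type*} [NormedAddCommGroup X] [NormedSpace ℂ X]
    [CompleteSpace X] [SeparableSpace X]
    (hinfdim : ¬ FiniteDimensional ℂ X)
    (D : Submodule ℂ X) (A : X → X)
    (hlin : IsLinearOn ℂ A (D : Set X))
    (hdd : Dense (D : Set X))
    (hcl : ∀ n : ℕ, 0 < n → ClosedPower A (D : Set X) n)
    (Y : Set X) (hYsub : Y ⊆ opCinf A (D : Set X)) (hYdense : Dense Y)
    (B : X → X) (hBmaps : Set.MapsTo B Y Y)
    (h1 : ∀ f ∈ Y, A (B f) = f)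
    (h2a : ∀ f ∈ Y, ∃ N : ℕ, ∀ n ≥ N, A^[n] f = 0)
    (α : ℝ) (hα : α ∈ Set.Ioo (0 : ℝ) 1)
    (h2b : ∀ f ∈ Y, ∃ c > 0, ∀ n : ℕ, 0 < n → ‖B^[n] f‖ ≤ c * α ^ n) :
    (∀ γ : ℝ, α < γ → γ < 1 →
      ∃ M : ℕ, 0 < M ∧ ∀ n ≥ M, ∀ l : ℂ, ‖l‖ ≤ 1 / γ ^ n →
        l ∈ pointSpecPow A (D : Set X) n) ∧
    (∀ l : ℂ, ‖l‖ < 1 / α →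
      ∃ M : ℕ, 0 < M ∧ ∀ n ≥ M, l ∈ pointSpecPow A (D : Set X) n) :=
  spectral_properties_part5_general hinfdim D A hlin hcl Y hYsub hYdense B hBmaps h1 h2a α hα h2b
end

section
/- Spectral properties, part 7 (eigenspace isomorphism): Let X be a complex infinite-dimensional separable Banach space and let A be a densely defined linear operator in X such that every power A^n (n ∈ ℕ) is a closed operator. Suppose B : X → X is a bounded linear operator such that: for every f ∈ X, Bf ∈ D(A) and A(Bf) = f; for every n ∈ ℕ, ker A^n ∩ R(B^n) = {0}; there exists a dense set Y ⊆ C^∞(A) with B(Y) ⊆ Y and Y ⊆ ⋃_{n≥1} ker A^n; and for every f ∈ X, limsup_{n→∞} ‖B^n f‖^{1/n} = 0. Then for every n ∈ ℕ and every λ ∈ ℂ, the map sending f ∈ ker A^n to f_{n,λ} := Σ_{m=0}^∞ λ^m B^{mn} f (with 0^0 := 1) is a well-defined linear isomorphism from ker A^n onto ker(A^n − λI); in particular dim ker(A^n − λI) = dim ker A^n. -/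
/-!
The series `Φ f = ∑ λᵐ Bᵐⁿ f` converges for every `f` because `B` is locally quasinilpotent, and
it inverts `I - λBⁿ` on all of `X`: `Φ f = f + λ Bⁿ (Φ f)` and `Φ (g - λ Bⁿ g) = g`. Since `Bⁿ`
is a right inverse of `Aⁿ` taking values in `D(Aⁿ)`, applying `Aⁿ` to the first identity turns
`Aⁿ f = 0` into `Aⁿ (Φ f) = λ Φ f`, and applying it to `g - λ Bⁿ g` turns `Aⁿ g = λ g` into
`Aⁿ (g - λ Bⁿ g) = 0`.
-/

open Filter Topology TopologicalSpace

open scoped NNReal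

theorem opDom_mono {X : Type*} {A : X → X} {D : Set X} {m n : ℕ} (hmn : m ≤ n) :
    opDom A D n ⊆ opDom A D m :=
  fun _ hx k hk => hx k (lt_of_lt_of_le hk hmn)

section Domain

variable {𝕜 X : Type*} [RCLike 𝕜] [NormedAddCommGroup X] [NormedSpace 𝕜 X]
  {A : X → X} {D : Submodule 𝕜 X}

namespace IsLinearOn

theorem map_zero (h : IsLinearOn 𝕜 A D) : A 0 = 0 := by
  simpa using h.2 0 0 D.zero_mem

theorem iterate_add (h : IsLinearOn 𝕜 A D) {n : ℕ} {x y : X} (hx : x ∈ opDom A D n)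
    (hy : y ∈ opDom A D n) : A^[n] (x + y) = A^[n] x + A^[n] y := by
  induction n with
  | zero => rfl
  | succ n ih =>
    rw [Function.iterate_succ_apply', Function.iterate_succ_apply', Function.iterate_succ_apply',
      ih (opDom_mono n.le_succ hx) (opDom_mono n.le_succ hy),
      h.1 _ (hx n n.lt_succ_self) _ (hy n n.lt_succ_self)]

theorem iterate_smul (h : IsLinearOn 𝕜 A D) {n : ℕ} (c : 𝕜) {x : X} (hx : x ∈ opDom A D n) :
    A^[n] (c • x) = c • A^[n] x := by
  induction n with
  | zero => rfl
  | succ n ih =>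
    rw [Function.iterate_succ_apply', Function.iterate_succ_apply',
      ih (opDom_mono n.le_succ hx), h.2 c _ (hx n n.lt_succ_self)]

def opDomSubmodule (h : IsLinearOn 𝕜 A D) (n : ℕ) : Submodule 𝕜 X where
  carrier := opDom A D n
  add_mem' {x y} hx hy k hk := by
    rw [h.iterate_add (opDom_mono hk.le hx) (opDom_mono hk.le hy)]
    exact D.add_mem (hx k hk) (hy k hk)
  zero_mem' k _ := by
    rw [Function.iterate_fixed h.map_zero]
    exact D.zero_mem
  smul_mem' c x hx k hk := by
    rw [h.iterate_smul c (opDom_mono hk.le hx)]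
    exact D.smul_mem c (hx k hk)

theorem iterate (h : IsLinearOn 𝕜 A D) (n : ℕ) :
    IsLinearOn 𝕜 A^[n] (h.opDomSubmodule n : Set X) :=
  ⟨fun _ hx _ hy => h.iterate_add hx hy, fun c _ hx => h.iterate_smul c hx⟩

end IsLinearOn

end Domain

theorem iterate_rightInverse_mem_opDom {X : Type*} {A B : X → X} {D : Set X}
    (hB : ∀ f, B f ∈ D ∧ A (B f) = f) (n : ℕ) (x : X) :
    B^[n] x ∈ opDom A D n ∧ A^[n] (B^[n] x) = x := by
  have hinv : Function.LeftInverse A B := fun f => (hB f).2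
  refine ⟨fun k hk => ?_, hinv.iterate n x⟩
  obtain ⟨j, rfl⟩ := Nat.exists_eq_add_of_lt hk
  rw [add_assoc, Function.iterate_add_apply, hinv.iterate k, Function.iterate_succ_apply']
  exact (hB _).1

section Summability

variable {𝕜 X : Type*} [NormedField 𝕜] [NormedAddCommGroup X] [NormedSpace 𝕜 X]

theorem eventually_norm_iterate_le_pow {T : X → X} {f : X} (h : orbitRad T f = 0) {r : ℝ≥0}
    (hr : 0 < r) : ∀ᶠ m in atTop, ‖T^[m] f‖ ≤ r ^ m := by
  have hlt : ∀ᶠ m : ℕ in atTop, (‖T^[m] f‖₊ : ENNReal) ^ (1 / (m : ℝ)) < r :=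
    eventually_lt_of_limsup_lt (by rw [← orbitRad, h]; exact_mod_cast hr)
  filter_upwards [hlt, eventually_gt_atTop 0] with m hm hm0
  rw [one_div, ENNReal.rpow_inv_lt_iff (by positivity), ENNReal.rpow_natCast,
    ← ENNReal.coe_pow, ENNReal.coe_lt_coe, ← NNReal.coe_lt_coe, NNReal.coe_pow, coe_nnnorm] at hm
  exact hm.le

theorem summable_pow_smul_iterate_mul [CompleteSpace X] {T : X → X} {f : X}
    (h : orbitRad T f = 0) {n : ℕ} (hn : 0 < n) (l : 𝕜) :
    Summable fun m : ℕ => l ^ m • T^[m * n] f := by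
  set r : ℝ≥0 := (‖l‖₊ + 1)⁻¹
  have hr1 : (r : ℝ) ≤ 1 := NNReal.coe_le_one.2 (inv_le_one_of_one_le₀ le_add_self)
  have hlr : ‖l‖ * r < 1 := by
    have : ‖l‖₊ * r < 1 := by
      rw [← div_eq_mul_inv, div_lt_one (by positivity)]
      exact lt_add_one _
    exact_mod_cast this
  refine .of_norm_bounded_eventually_nat
    (summable_geometric_of_lt_one (by positivity) hlr) ?_
  filter_upwards [(tendsto_id.atTop_mul_const' hn).eventually
    (eventually_norm_iterate_le_pow h (r := r) (by positivity))] with m hm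
  calc ‖l ^ m • T^[m * n] f‖ ≤ ‖l‖ ^ m * (r : ℝ) ^ (m * n) := by
        rw [norm_smul, norm_pow]; gcongr; exact hm
    _ ≤ ‖l‖ ^ m * (r : ℝ) ^ m :=
        mul_le_mul_of_nonneg_left (pow_le_pow_of_le_one r.2 hr1 (Nat.le_mul_of_pos_right m hn))
          (by positivity)
    _ = (‖l‖ * r) ^ m := (mul_pow _ _ _).symm

end Summability

section NeumannSeries

variable {𝕜 X : Type*} [NormedField 𝕜] [NormedAddCommGroup X] [NormedSpace 𝕜 X]
  {T : X →L[𝕜] X} {l : 𝕜}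

noncomputable def neumannSeries (T : X →L[𝕜] X) (l : 𝕜) (f : X) : X :=
  ∑' m : ℕ, l ^ m • (T ^ m) f

theorem neumannSeries_add {f g : X} (hf : Summable fun m : ℕ => l ^ m • (T ^ m) f)
    (hg : Summable fun m : ℕ => l ^ m • (T ^ m) g) :
    neumannSeries T l (f + g) = neumannSeries T l f + neumannSeries T l g := by
  simp only [neumannSeries, map_add, smul_add]
  exact hf.tsum_add hg

theorem neumannSeries_smul (c : 𝕜) (f : X) :
    neumannSeries T l (c • f) = c • neumannSeries T l f := by
  simp only [neumannSeries, map_smul, smul_comm _ c]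
  exact tsum_const_smul'' c

theorem neumannSeries_eq_add {f : X} (hf : Summable fun m : ℕ => l ^ m • (T ^ m) f) :
    neumannSeries T l f = f + l • T (neumannSeries T l f) := by
  calc neumannSeries T l f = f + ∑' m : ℕ, l • T (l ^ m • (T ^ m) f) := by
        simp only [neumannSeries, hf.tsum_eq_zero_add, pow_zero, one_smul, one_apply_eq_self,
          pow_succ', mul_smul, mul_apply_eq_comp, map_smul]
    _ = f + l • T (neumannSeries T l f) := by
        rw [tsum_const_smul'', ← T.map_tsum hf, neumannSeries]

theorem map_neumannSeries {g : X} (hg : Summable fun m : ℕ => l ^ m • (T ^ m) g) :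
    T (neumannSeries T l g) = neumannSeries T l (T g) := by
  simp only [neumannSeries, T.map_tsum hg, map_smul, ← mul_apply_eq_comp, ← pow_succ, ← pow_succ']

theorem neumannSeries_sub_smul (hsum : ∀ f : X, Summable fun m : ℕ => l ^ m • (T ^ m) f)
    (g : X) : neumannSeries T l (g - l • T g) = g := by
  rw [sub_eq_add_neg, ← neg_smul, neumannSeries_add (hsum g) (hsum _), neumannSeries_smul,
    ← map_neumannSeries (hsum g), neg_smul, ← sub_eq_add_neg, sub_eq_iff_eq_add,
    ← neumannSeries_eq_add (hsum g)]

theorem neumannSeries_leftInverse (hsum : ∀ f : X, Summable fun m : ℕ => l ^ m • (T ^ m) f) :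
    Function.LeftInverse (fun y => y - l • T y) (neumannSeries T l) :=
  fun f => (eq_sub_of_add_eq (neumannSeries_eq_add (hsum f)).symm).symm

end NeumannSeries

section Eigenspaces

variable {𝕜 X : Type*} [RCLike 𝕜] [NormedAddCommGroup X] [NormedSpace 𝕜 X]
  {E : Submodule 𝕜 X} {P : X → X} {T : X →L[𝕜] X} {l : 𝕜}

theorem neumannSeries_mem_eigenspace (hP : IsLinearOn 𝕜 P E) (hT : ∀ x, T x ∈ E ∧ P (T x) = x)
    {f : X} (hf : f ∈ E) (hPf : P f = 0) (hsum : Summable fun m : ℕ => l ^ m • (T ^ m) f) :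
    neumannSeries T l f ∈ E ∧ P (neumannSeries T l f) = l • neumannSeries T l f := by
  set y := neumannSeries T l f
  have hy : y = f + l • T y := neumannSeries_eq_add hsum
  have hlTy : l • T y ∈ E := E.smul_mem l (hT y).1
  refine ⟨hy ▸ E.add_mem hf hlTy, ?_⟩
  rw [hy, hP.1 f hf _ hlTy, hP.2 l _ (hT y).1, hPf, (hT y).2, zero_add, ← hy]

theorem sub_smul_apply_mem_ker (hP : IsLinearOn 𝕜 P E) (hT : ∀ x, T x ∈ E ∧ P (T x) = x)
    {g : X} (hg : g ∈ E) (hPg : P g = l • g) : g - l • T g ∈ E ∧ P (g - l • T g) = 0 := by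
  have hlTg : (-l) • T g ∈ E := E.smul_mem (-l) (hT g).1
  rw [sub_eq_add_neg, ← neg_smul]
  refine ⟨E.add_mem hg hlTg, ?_⟩
  rw [hP.1 g hg _ hlTg, hP.2 (-l) _ (hT g).1, hPg, (hT g).2, neg_smul, add_neg_cancel]

theorem bijOn_neumannSeries (hP : IsLinearOn 𝕜 P E) (hT : ∀ x, T x ∈ E ∧ P (T x) = x)
    (hsum : ∀ f : X, Summable fun m : ℕ => l ^ m • (T ^ m) f) :
    Set.BijOn (neumannSeries T l) {g | g ∈ E ∧ P g = 0} {g | g ∈ E ∧ P g = l • g} :=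
  ⟨fun f hf => neumannSeries_mem_eigenspace hP hT hf.1 hf.2 (hsum f),
    (neumannSeries_leftInverse hsum).injective.injOn,
    fun g hg => ⟨g - l • T g, sub_smul_apply_mem_ker hP hT hg.1 hg.2, neumannSeries_sub_smul hsum g⟩⟩

end Eigenspaces

theorem spectral_properties_part7_eigenspace_isomorphism_general
    {X : Type*} [NormedAddCommGroup X] [NormedSpace ℂ X]
    [CompleteSpace X]
    (D : Submodule ℂ X) (A : X → X)
    (hlin : IsLinearOn ℂ A (D : Set X))
    (B : X →L[ℂ] X)
    (hB1 : ∀ f : X, B f ∈ (D : Set X) ∧ A (B f) = f)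
    (hquasi : ∀ f : X, orbitRad (⇑B) f = 0) :
    ∀ n : ℕ, 0 < n → ∀ l : ℂ,
      (∀ f, f ∈ opDom A (D : Set X) n → A^[n] f = 0 →
        Summable (fun m : ℕ => l ^ m • (⇑B)^[m * n] f)) ∧
      Set.BijOn (fun f => ∑' m : ℕ, l ^ m • (⇑B)^[m * n] f)
        {g | g ∈ opDom A (D : Set X) n ∧ A^[n] g = 0}
        {g | g ∈ opDom A (D : Set X) n ∧ A^[n] g = l • g} ∧
      (∀ f ∈ {g | g ∈ opDom A (D : Set X) n ∧ A^[n] g = 0},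
       ∀ g ∈ {g | g ∈ opDom A (D : Set X) n ∧ A^[n] g = 0},
        (∑' m : ℕ, l ^ m • (⇑B)^[m * n] (f + g)) =
          (∑' m : ℕ, l ^ m • (⇑B)^[m * n] f) + ∑' m : ℕ, l ^ m • (⇑B)^[m * n] g) ∧
      (∀ (c : ℂ), ∀ f ∈ {g | g ∈ opDom A (D : Set X) n ∧ A^[n] g = 0},
        (∑' m : ℕ, l ^ m • (⇑B)^[m * n] (c • f)) =
          c • ∑' m : ℕ, l ^ m • (⇑B)^[m * n] f) := by
  intro n hn l
  have hpow : ∀ (m : ℕ) (f : X), (⇑B)^[m * n] f = ((B ^ n) ^ m) f := fun m f => by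
    rw [← pow_mul', FunLike.coe_pow_eq_iterate]
  have hsum : ∀ f, Summable fun m : ℕ => l ^ m • ((B ^ n) ^ m) f := fun f => by
    simpa only [hpow] using summable_pow_smul_iterate_mul (hquasi f) hn l
  have hBn : ∀ x, (B ^ n) x ∈ hlin.opDomSubmodule n ∧ A^[n] ((B ^ n) x) = x := fun x => by
    rw [FunLike.coe_pow_eq_iterate]
    exact iterate_rightInverse_mem_opDom hB1 n x
  simp only [hpow]
  exact ⟨fun f _ _ => hsum f, bijOn_neumannSeries (hlin.iterate n) hBn hsum,
    fun f _ g _ => neumannSeries_add (hsum f) (hsum g), fun c f _ => neumannSeries_smul c f⟩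

/-- **Spectral properties, part 7: eigenspace isomorphism.**
The map `f ↦ ∑' m, λ^m • B^(mn) f` is a linear bijection from
`ker Aⁿ` onto `ker (Aⁿ - λI)`. -/
theorem spectral_properties_part7_eigenspace_isomorphism
    {X : Type*} [NormedAddCommGroup X] [NormedSpace ℂ X]
    [CompleteSpace X] [SeparableSpace X]
    (hinfdim : ¬ FiniteDimensional ℂ X)
    (D : Submodule ℂ X) (A : X → X)
    (hlin : IsLinearOn ℂ A (D : Set X))
    (hdd : Dense (D : Set X))
    (hcl : ∀ n : ℕ, 0 < n → ClosedPower A (D : Set X) n)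
    (B : X →L[ℂ] X)
    (hB1 : ∀ f : X, B f ∈ (D : Set X) ∧ A (B f) = f)
    (hkerR : ∀ n : ℕ, 0 < n → ∀ x, x ∈ opDom A (D : Set X) n → A^[n] x = 0 →
      (∃ y, (⇑B)^[n] y = x) → x = 0)
    (Y : Set X) (hYsub : Y ⊆ opCinf A (D : Set X)) (hYdense : Dense Y)
    (hBmaps : Set.MapsTo (⇑B) Y Y)
    (hYker : ∀ f ∈ Y, ∃ N : ℕ, ∀ n ≥ N, A^[n] f = 0)
    (hquasi : ∀ f : X, orbitRad (⇑B) f = 0) :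
    ∀ n : ℕ, 0 < n → ∀ l : ℂ,
      (∀ f, f ∈ opDom A (D : Set X) n → A^[n] f = 0 →
        Summable (fun m : ℕ => l ^ m • (⇑B)^[m * n] f)) ∧
      Set.BijOn (fun f => ∑' m : ℕ, l ^ m • (⇑B)^[m * n] f)
        {g | g ∈ opDom A (D : Set X) n ∧ A^[n] g = 0}
        {g | g ∈ opDom A (D : Set X) n ∧ A^[n] g = l • g} ∧
      (∀ f ∈ {g | g ∈ opDom A (D : Set X) n ∧ A^[n] g = 0},
       ∀ g ∈ {g | g ∈ opDom A (D : Set X) n ∧ A^[n] g = 0},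
        (∑' m : ℕ, l ^ m • (⇑B)^[m * n] (f + g)) =
          (∑' m : ℕ, l ^ m • (⇑B)^[m * n] f) + ∑' m : ℕ, l ^ m • (⇑B)^[m * n] g) ∧
      (∀ (c : ℂ), ∀ f ∈ {g | g ∈ opDom A (D : Set X) n ∧ A^[n] g = 0},
        (∑' m : ℕ, l ^ m • (⇑B)^[m * n] (c • f)) =
          c • ∑' m : ℕ, l ^ m • (⇑B)^[m * n] f) :=
  spectral_properties_part7_eigenspace_isomorphism_general D A hlin B hB1 hquasi
end

section
/- Unit circle in the point spectra: Let X be a complex infinite-dimensional separable Banach space and let A be a densely defined linear operator in X such that every power A^n (n ∈ ℕ) is a closed operator, and suppose there exist a set Y ⊆ C^∞(A) dense in X and a mapping B : Y → Y such that (1) ABf = f for every f ∈ Y and (2) for every f ∈ Y there exist α = α(f) ∈ (0,1) and c = c(f,α) > 0 with max(‖A^n f‖, ‖B^n f‖) ≤ c·α^n for all n ∈ ℕ. Then there exists M ∈ ℕ such that for every n ≥ M the unit circle {λ ∈ ℂ : |λ| = 1} is contained in the point spectrum σ_p(A^n). -/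
open Filter Topology TopologicalSpace

/-!
Fix `f ≠ 0` in `Y` and let `c` be its two-sided orbit: `c m = Aᵐ f` for `m ≥ 0` and
`c (-m) = Bᵐ f`. Then `A (c m) = c (m + 1)` and `‖c m‖` decays geometrically in `|m|`, so for
`|μ| = 1` the series `g μ = ∑ μ⁻ᵐ c m` converges and, `A` being closed, `A (g μ) = μ g μ`.
Averaging `g` over the `n`-th roots of `λ` leaves `f` plus terms `c m` with `|m| ≥ n`, whose
total norm is eventually below `‖f‖`; hence for large `n` one of these roots `μ` has `g μ ≠ 0`,
and `g μ` is an eigenvector of `Aⁿ` for `μⁿ = λ`.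
-/

theorem opDom_one {X : Type*} (A : X → X) (D : Set X) : opDom A D 1 = D := by
  ext x
  simp [opDom]

section LinearOn

variable {X : Type*} [NormedAddCommGroup X] [NormedSpace ℂ X] {D : Submodule ℂ X} {A : X → X}

theorem IsLinearOn.map_zero_s19 (hlin : IsLinearOn ℂ A D) : A 0 = 0 := by
  simpa using hlin.2 0 0 D.zero_mem

theorem IsLinearOn.map_sum (hlin : IsLinearOn ℂ A D) {ι : Type*} (s : Finset ι) {x : ι → X}
    (hx : ∀ i, x i ∈ D) : A (∑ i ∈ s, x i) = ∑ i ∈ s, A (x i) := by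
  classical
  induction s using Finset.induction_on with
  | empty => simpa using hlin.map_zero_s19
  | insert i s hi ih =>
    rw [Finset.sum_insert hi, Finset.sum_insert hi,
      hlin.1 _ (hx i) _ (D.sum_mem fun j _ => hx j), ih]

theorem IsLinearOn.iterate_eq_pow_smul (hlin : IsLinearOn ℂ A D) {g : X} {μ : ℂ} (hg : g ∈ D)
    (hAg : A g = μ • g) (k : ℕ) : A^[k] g = μ ^ k • g := by
  induction k with
  | zero => simp
  | succ k ih =>
    rw [Function.iterate_succ_apply', ih, hlin.2 _ _ hg, hAg, smul_smul, pow_succ]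

theorem IsLinearOn.pow_mem_pointSpecPow (hlin : IsLinearOn ℂ A D) {g : X} {μ : ℂ}
    (hg0 : g ≠ 0) (hg : g ∈ D) (hAg : A g = μ • g) (n : ℕ) :
    μ ^ n ∈ pointSpecPow A D n := by
  refine ⟨g, hg0, fun k _ => ?_, hlin.iterate_eq_pow_smul hg hAg n⟩
  rw [hlin.iterate_eq_pow_smul hg hAg k]
  exact D.smul_mem _ hg

theorem ClosedPower.mem_and_apply_eq_of_hasSum (hcl : ClosedPower A D 1)
    (hlin : IsLinearOn ℂ A D) {ι : Type*} {x : ι → X} {s t : X} (hx : ∀ i, x i ∈ D)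
    (hs : HasSum x s) (ht : HasSum (fun i => A (x i)) t) : s ∈ D ∧ A s = t := by
  have hgraph := hcl.mem_of_tendsto (hs.prodMk ht) <| Eventually.of_forall fun F =>
    ⟨by simpa [opDom_one, Prod.fst_sum] using D.sum_mem fun i _ => hx i,
      by simp [Prod.fst_sum, Prod.snd_sum, hlin.map_sum F hx]⟩
  simp only [opDom_one, Function.iterate_one, Set.mem_ofPred_eq] at hgraph
  exact ⟨hgraph.1, hgraph.2.symm⟩

end LinearOn

section NormTail

variable {X : Type*} [NormedAddCommGroup X]

noncomputable def normTail (c : ℤ → X) (n : ℕ) : ℝ :=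
  ∑' m : ℤ, if n ≤ m.natAbs then ‖c m‖ else 0

theorem tendsto_normTail {c : ℤ → X} (hc : Summable (‖c ·‖)) :
    Tendsto (normTail c) atTop (𝓝 0) := by
  unfold normTail
  have key := tendsto_tsum_of_dominated_convergence (𝓕 := atTop) (g := fun _ : ℤ => (0 : ℝ))
    (f := fun (n : ℕ) (m : ℤ) => if n ≤ m.natAbs then ‖c m‖ else 0) hc
    (fun m => tendsto_const_nhds.congr' <| (eventually_gt_atTop m.natAbs).mono fun n hn =>
      (if_neg (not_le.2 hn)).symm)
    (Eventually.of_forall fun n m => by split_ifs <;> simp)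
  simpa only [tsum_zero] using key

end NormTail

section EigenSeries

variable {X : Type*} [NormedAddCommGroup X] [NormedSpace ℂ X] [CompleteSpace X]

noncomputable def eigenSeries (c : ℤ → X) (μ : ℂ) : X :=
  ∑' m : ℤ, μ ^ (-m) • c m

variable {c : ℤ → X}

theorem summable_zpow_smul (hc : Summable (‖c ·‖)) {μ : ℂ} (hμ : ‖μ‖ = 1) :
    Summable fun m : ℤ => μ ^ (-m) • c m :=
  hc.of_norm_bounded fun m => by rw [norm_smul, norm_zpow, hμ, one_zpow, one_mul]

theorem eigenSeries_mem_and_apply {D : Submodule ℂ X} {A : X → X} (hlin : IsLinearOn ℂ A D)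
    (hcl : ClosedPower A D 1) (hcD : ∀ m, c m ∈ D) (hAc : ∀ m, A (c m) = c (m + 1))
    (hc : Summable (‖c ·‖)) {μ : ℂ} (hμ : ‖μ‖ = 1) :
    eigenSeries c μ ∈ D ∧ A (eigenSeries c μ) = μ • eigenSeries c μ := by
  have hμ0 : μ ≠ 0 := norm_ne_zero_iff.1 (by rw [hμ]; exact one_ne_zero)
  have hsum := (summable_zpow_smul hc hμ).hasSum
  have hshift : HasSum (fun m : ℤ => μ ^ (-(m + 1)) • c (m + 1)) (eigenSeries c μ) :=
    (Equiv.addRight (1 : ℤ)).hasSum_iff.2 hsum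
  refine hcl.mem_and_apply_eq_of_hasSum hlin (fun m => D.smul_mem _ (hcD m)) hsum ?_
  have hterm : ∀ m : ℤ, A (μ ^ (-m) • c m) = μ • μ ^ (-(m + 1)) • c (m + 1) := fun m => by
    rw [hlin.2 _ _ (hcD m), hAc, smul_smul, ← zpow_one_add₀ hμ0]
    ring_nf
  simpa only [hterm] using hshift.const_smul μ

theorem sum_zpow_pow_primitiveRoot {ω : ℂ} {n : ℕ} (hω : IsPrimitiveRoot ω n) (m : ℤ) :
    ∑ j ∈ Finset.range n, (ω ^ j) ^ m = if (n : ℤ) ∣ m then (n : ℂ) else 0 := by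
  have hpow : ∀ j : ℕ, (ω ^ j) ^ m = (ω ^ m) ^ j := fun j => by
    rw [← zpow_natCast, ← zpow_natCast, ← zpow_mul, ← zpow_mul, mul_comm]
  simp only [hpow]
  split_ifs with hdvd
  · simp [(hω.zpow_eq_one_iff_dvd m).2 hdvd]
  · have hne : ω ^ m ≠ 1 := mt (hω.zpow_eq_one_iff_dvd m).1 hdvd
    rw [geom_sum_eq hne, ← zpow_natCast, ← zpow_mul, mul_comm, zpow_mul, zpow_natCast,
      hω.pow_eq_one, one_zpow, sub_self, zero_div]

theorem sum_eigenSeries_mul_primitiveRoot (hc : Summable (‖c ·‖)) {ν ω : ℂ} {n : ℕ}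
    (hν : ‖ν‖ = 1) (hω : IsPrimitiveRoot ω n) (hn : n ≠ 0) :
    ∑ j ∈ Finset.range n, eigenSeries c (ν * ω ^ j) =
      (n : ℂ) • ∑' m : ℤ, (if (n : ℤ) ∣ m then ν ^ (-m) else 0) • c m := by
  have hroot : ∀ j, ‖ν * ω ^ j‖ = 1 := fun j => by
    rw [norm_mul, norm_pow, hω.norm'_eq_one hn, one_pow, mul_one, hν]
  unfold eigenSeries
  rw [← Summable.tsum_finsetSum fun j _ => summable_zpow_smul hc (hroot j),
    ← tsum_const_smul'']
  refine tsum_congr fun m => ?_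
  rw [← Finset.sum_smul, smul_smul]
  simp_rw [mul_zpow, ← Finset.mul_sum, sum_zpow_pow_primitiveRoot hω, dvd_neg]
  split_ifs <;> simp [mul_comm]

theorem norm_tsum_dvd_sub_le_normTail (hc : Summable (‖c ·‖)) {ν : ℂ} (hν : ‖ν‖ = 1) (n : ℕ) :
    ‖(∑' m : ℤ, (if (n : ℤ) ∣ m then ν ^ (-m) else 0) • c m) - c 0‖ ≤ normTail c n := by
  set u : ℤ → X := fun m => (if (n : ℤ) ∣ m then ν ^ (-m) else 0) • c m
  have hu : Summable u := hc.of_norm_bounded fun m => by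
    simp only [u, norm_smul]
    split_ifs <;> simp [norm_zpow, hν]
  have htail : Summable fun m : ℤ => if n ≤ m.natAbs then ‖c m‖ else 0 :=
    hc.of_nonneg_of_le (fun m => by positivity) fun m => by split_ifs <;> simp
  rw [hu.tsum_eq_add_tsum_ite 0, show u 0 = c 0 by simp [u], add_sub_cancel_left]
  refine tsum_of_norm_bounded htail.hasSum fun m => ?_
  by_cases hm : m = 0
  · simp only [hm, if_true, norm_zero]
    positivity
  simp only [hm, if_false, u, norm_smul]
  by_cases hdvd : (n : ℤ) ∣ m
  · have hnm : n ≤ m.natAbs := Nat.le_of_dvd (Int.natAbs_pos.2 hm) (Int.natCast_dvd.1 hdvd)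
    simp [hdvd, hnm, norm_zpow, hν]
  · simp only [hdvd, if_false, norm_zero, zero_mul]
    positivity

theorem exists_eigenSeries_mul_primitiveRoot_ne_zero (hc : Summable (‖c ·‖)) {ν ω : ℂ} {n : ℕ}
    (hν : ‖ν‖ = 1) (hω : IsPrimitiveRoot ω n) (hn : n ≠ 0) (hsmall : normTail c n < ‖c 0‖) :
    ∃ j, eigenSeries c (ν * ω ^ j) ≠ 0 := by
  by_contra! hzero
  have hdvd_sum : ∑' m : ℤ, (if (n : ℤ) ∣ m then ν ^ (-m) else 0) • c m = 0 := by
    have hsum := sum_eigenSeries_mul_primitiveRoot hc hν hω hn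
    simp only [hzero, Finset.sum_const_zero] at hsum
    exact (smul_eq_zero.1 hsum.symm).resolve_left (Nat.cast_ne_zero.2 hn)
  have hle := norm_tsum_dvd_sub_le_normTail hc hν n
  rw [hdvd_sum, zero_sub, norm_neg] at hle
  exact hle.not_gt hsmall

end EigenSeries

section BiOrbit

variable {X : Type*} {A B : X → X} {f : X}

def biOrbit (A B : X → X) (f : X) (m : ℤ) : X :=
  if 0 ≤ m then A^[m.toNat] f else B^[m.natAbs] f

@[simp]
theorem biOrbit_zero : biOrbit A B f 0 = f := by
  simp [biOrbit]

@[simp]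
theorem biOrbit_natCast (k : ℕ) : biOrbit A B f k = A^[k] f := by
  simp [biOrbit]

@[simp]
theorem biOrbit_neg_natCast (k : ℕ) : biOrbit A B f (-k) = B^[k] f := by
  rcases Nat.eq_zero_or_pos k with rfl | hk
  · simp [biOrbit]
  · simp [biOrbit, hk.ne']

theorem apply_biOrbit_natCast (k : ℕ) : A (biOrbit A B f k) = biOrbit A B f (k + 1) := by
  rw [biOrbit_natCast, ← Nat.cast_succ, biOrbit_natCast, Function.iterate_succ_apply']

theorem apply_biOrbit {Y : Set X} (hB : Set.MapsTo B Y Y) (hAB : ∀ g ∈ Y, A (B g) = g)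
    (hf : f ∈ Y) (m : ℤ) : A (biOrbit A B f m) = biOrbit A B f (m + 1) := by
  obtain ⟨k, rfl | rfl⟩ := Int.eq_nat_or_neg m
  · exact apply_biOrbit_natCast k
  · cases k with
    | zero => simpa using apply_biOrbit_natCast 0
    | succ k =>
      rw [biOrbit_neg_natCast, Function.iterate_succ_apply', hAB _ (hB.iterate k hf),
        show -((k + 1 : ℕ) : ℤ) + 1 = -k by push_cast; ring, biOrbit_neg_natCast]

theorem biOrbit_mem {D Y : Set X} (hYsub : Y ⊆ opCinf A D) (hB : Set.MapsTo B Y Y) (hf : f ∈ Y)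
    (m : ℤ) : biOrbit A B f m ∈ D := by
  obtain ⟨k, rfl | rfl⟩ := Int.eq_nat_or_neg m
  · simpa using hYsub hf k
  · simpa using hYsub (hB.iterate k hf) 0

theorem summable_norm_biOrbit [NormedAddCommGroup X] {α C : ℝ} (hα₀ : 0 ≤ α) (hα₁ : α < 1)
    (hbound : ∀ n : ℕ, 0 < n → max ‖A^[n] f‖ ‖B^[n] f‖ ≤ C * α ^ n) :
    Summable fun m => ‖biOrbit A B f m‖ := by
  have hgeom : Summable fun m : ℤ => C * α ^ m.natAbs :=
    .of_nat_of_neg (by simpa using (summable_geometric_of_lt_one hα₀ hα₁).mul_left C)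
      (by simpa using (summable_geometric_of_lt_one hα₀ hα₁).mul_left C)
  refine hgeom.of_norm_bounded_eventually <|
    (Set.finite_singleton (0 : ℤ)).eventually_cofinite_notMem.mono fun m hm => ?_
  obtain ⟨k, rfl | rfl⟩ := Int.eq_nat_or_neg m
  · have hk : 0 < k := Nat.pos_of_ne_zero (by simpa using hm)
    simpa using (le_max_left _ _).trans (hbound k hk)
  · have hk : 0 < k := Nat.pos_of_ne_zero (by simpa using hm)
    simpa using (le_max_right _ _).trans (hbound k hk)

end BiOrbit

theorem exists_forall_ge_unit_circle_subset_pointSpecPow {X : Type*} [NormedAddCommGroup X]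
    [NormedSpace ℂ X] [CompleteSpace X] {D : Submodule ℂ X} {A : X → X} {c : ℤ → X}
    (hlin : IsLinearOn ℂ A D) (hcl : ClosedPower A D 1) (hcD : ∀ m, c m ∈ D)
    (hAc : ∀ m, A (c m) = c (m + 1)) (hc : Summable (‖c ·‖)) (hc0 : c 0 ≠ 0) :
    ∃ M : ℕ, 0 < M ∧ ∀ n ≥ M, ∀ l : ℂ, ‖l‖ = 1 → l ∈ pointSpecPow A D n := by
  obtain ⟨M, hM⟩ := eventually_atTop.1
    ((tendsto_normTail hc).eventually_lt_const (norm_pos_iff.2 hc0))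
  refine ⟨max M 1, by omega, fun n hn l hl => ?_⟩
  have hn0 : n ≠ 0 := by omega
  set ν : ℂ := l ^ ((n : ℂ)⁻¹)
  have hνn : ν ^ n = l := Complex.cpow_nat_inv_pow l hn0
  have hν : ‖ν‖ = 1 :=
    (pow_eq_one_iff_of_nonneg (norm_nonneg ν) hn0).1 (by rw [← norm_pow, hνn, hl])
  have hω := Complex.isPrimitiveRoot_exp n hn0
  obtain ⟨j, hj⟩ := exists_eigenSeries_mul_primitiveRoot_ne_zero hc hν hω hn0 (hM n (by omega))
  set μ := ν * Complex.exp (2 * Real.pi * Complex.I / n) ^ j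
  have hμ : ‖μ‖ = 1 := by rw [norm_mul, norm_pow, hω.norm'_eq_one hn0, one_pow, mul_one, hν]
  have hμn : μ ^ n = l := by
    rw [mul_pow, ← pow_mul, mul_comm j, pow_mul, hω.pow_eq_one, one_pow, mul_one, hνn]
  obtain ⟨hmem, heigen⟩ := eigenSeries_mem_and_apply hlin hcl hcD hAc hc hμ
  simpa only [hμn] using hlin.pow_mem_pointSpecPow hj hmem heigen n

theorem unit_circle_in_point_spectra_general
    {X : Type*} [NormedAddCommGroup X] [NormedSpace ℂ X]
    [CompleteSpace X]
    (hinfdim : ¬ FiniteDimensional ℂ X)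
    (D : Submodule ℂ X) (A : X → X)
    (hlin : IsLinearOn ℂ A (D : Set X))
    (hcl : ∀ n : ℕ, 0 < n → ClosedPower A (D : Set X) n)
    (Y : Set X) (hYsub : Y ⊆ opCinf A (D : Set X)) (hYdense : Dense Y)
    (B : X → X) (hBmaps : Set.MapsTo B Y Y)
    (h1 : ∀ f ∈ Y, A (B f) = f)
    (h2 : ∀ f ∈ Y, ∃ α ∈ Set.Ioo (0 : ℝ) 1, ∃ c > 0,
      ∀ n : ℕ, 0 < n → max ‖A^[n] f‖ ‖B^[n] f‖ ≤ c * α ^ n)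
    :
    ∃ M : ℕ, 0 < M ∧ ∀ n ≥ M, ∀ l : ℂ, ‖l‖ = 1 →
      l ∈ pointSpecPow A (D : Set X) n := by
  have : Nontrivial X := by
    by_contra hX
    rw [not_nontrivial_iff_subsingleton] at hX
    exact hinfdim inferInstance
  obtain ⟨f, hfY, hf0⟩ := hYdense.exists_mem_open isOpen_ne (exists_ne (0 : X))
  obtain ⟨α, ⟨hα₀, hα₁⟩, C, -, hbound⟩ := h2 f hfY
  exact exists_forall_ge_unit_circle_subset_pointSpecPow hlin (hcl 1 one_pos)
    (biOrbit_mem hYsub hBmaps hfY) (apply_biOrbit hBmaps h1 hfY)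
    (summable_norm_biOrbit hα₀.le hα₁ hbound) (by rwa [biOrbit_zero])

/-- **Unit circle in the point spectra.** -/
theorem unit_circle_in_point_spectra
    {X : Type*} [NormedAddCommGroup X] [NormedSpace ℂ X]
    [CompleteSpace X] [SeparableSpace X]
    (hinfdim : ¬ FiniteDimensional ℂ X)
    (D : Submodule ℂ X) (A : X → X)
    (hlin : IsLinearOn ℂ A (D : Set X))
    (hdd : Dense (D : Set X))
    (hcl : ∀ n : ℕ, 0 < n → ClosedPower A (D : Set X) n)
    (Y : Set X) (hYsub : Y ⊆ opCinf A (D : Set X)) (hYdense : Dense Y)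
    (B : X → X) (hBmaps : Set.MapsTo B Y Y)
    (h1 : ∀ f ∈ Y, A (B f) = f)
    (h2 : ∀ f ∈ Y, ∃ α ∈ Set.Ioo (0 : ℝ) 1, ∃ c > 0,
      ∀ n : ℕ, 0 < n → max ‖A^[n] f‖ ‖B^[n] f‖ ≤ c * α ^ n)
    :
    ∃ M : ℕ, 0 < M ∧ ∀ n ≥ M, ∀ l : ℂ, ‖l‖ = 1 →
      l ∈ pointSpecPow A (D : Set X) n :=
  unit_circle_in_point_spectra_general hinfdim D A hlin hcl Y hYsub hYdense B hBmaps h1 h2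
end
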